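/- Let D ⊆ ℝ² be open and let μ be a real number with μ ≠ 0 and μ ≠ 1. Let F, G : D → SU(2) and u₀, v₀, p₁, p₂, q₁, q₂ : D → ℝ be smooth, set B₁ = p₁·e₁ + p₂·e₂ and B₋₁ = q₁·e₁ + q₂·e₂, and assume F⁻¹·∂ᵤF = u₀·e₃ + B₁, F⁻¹·∂ᵥF = v₀·e₃ + B₋₁, G⁻¹·∂ᵤG = u₀·e₃ + μ·B₁ and G⁻¹·∂ᵥG = v₀·e₃ + μ⁻¹·B₋₁ on D. Set f = G·F⁻¹. Then at every point of D: ⟨f⁻¹·∂ᵤf, F·e₃·F⁻¹⟩ = 0 and ⟨f⁻¹·∂ᵥf, F·e₃·F⁻¹⟩ = 0 (so n = f·F·e₃·F⁻¹ is a unit normal to f); moreover ⟨f⁻¹·∂ᵤ∂ᵤf, F·e₃·F⁻¹⟩ = 0, ⟨f⁻¹·∂ᵥ∂ᵥf, F·e₃·F⁻¹⟩ = 0, and ⟨f⁻¹·∂ᵥ∂ᵤf, F·e₃·F⁻¹⟩ = (μ⁻¹ - μ)·(p₁·q₂ - p₂·q₁). -/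

import Mathlib

open Matrix

attribute [local instance] Matrix.frobeniusNormedAddCommGroup Matrix.frobeniusNormedSpace

noncomputable section

/-- Basis of su(2). -/
def e1 : Matrix (Fin 2) (Fin 2) ℂ := !![0, 1; -1, 0]
def e2 : Matrix (Fin 2) (Fin 2) ℂ := !![0, Complex.I; Complex.I, 0]
def e3 : Matrix (Fin 2) (Fin 2) ℂ := !![Complex.I, 0; 0, -Complex.I]

def xi1 (θ : ℝ) : Matrix (Fin 2) (Fin 2) ℂ := Real.cos θ • e1 - Real.sin θ • e2
def xi2 (θ : ℝ) : Matrix (Fin 2) (Fin 2) ℂ := Real.cos θ • e1 + Real.sin θ • e2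

/-- Partial derivative in the `u` direction. -/
def pu {E : Type*} [NormedAddCommGroup E] [NormedSpace ℝ E]
    (f : ℝ × ℝ → E) (p : ℝ × ℝ) : E := fderiv ℝ f p (1, 0)

/-- Partial derivative in the `v` direction. -/
def pv {E : Type*} [NormedAddCommGroup E] [NormedSpace ℝ E]
    (f : ℝ × ℝ → E) (p : ℝ × ℝ) : E := fderiv ℝ f p (0, 1)

/-- The normal Gauss map `ν = F·e₃·F⁻¹`. -/
def nu (F : ℝ × ℝ → Matrix (Fin 2) (Fin 2) ℂ) (p : ℝ × ℝ) : Matrix (Fin 2) (Fin 2) ℂ :=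
  F p * e3 * (F p)⁻¹

/-- The real inner product `⟨X, Y⟩ = -(1/2)·Re(Tr(X·Y))` on 2×2 complex matrices. -/
def ip (X Y : Matrix (Fin 2) (Fin 2) ℂ) : ℝ := -(1 / 2) * (Matrix.trace (X * Y)).re

/-! ### Auxiliary material -/

attribute [local instance] Matrix.frobeniusNormedRing Matrix.frobeniusNormedAlgebra

abbrev M2 := Matrix (Fin 2) (Fin 2) ℂ

def sComb (a b c : ℝ) : M2 := a • e1 + b • e2 + c • e3

lemma star_e1 : star e1 = -e1 := by
  ext i j; fin_cases i <;> fin_cases j <;> simp [e1, conjTranspose_apply]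
lemma star_e2 : star e2 = -e2 := by
  ext i j; fin_cases i <;> fin_cases j <;> simp [e2, conjTranspose_apply]
lemma star_e3 : star e3 = -e3 := by
  ext i j; fin_cases i <;> fin_cases j <;> simp [e3, conjTranspose_apply]

lemma star_sComb (a b c : ℝ) : star (sComb a b c) = -sComb a b c := by
  simp [sComb, star_add, star_smul, star_e1, star_e2, star_e3]; abel

lemma sComb_sub (a b c a' b' c' : ℝ) :
    sComb a b c - sComb a' b' c' = sComb (a - a') (b - b') (c - c') := by
  simp [sComb, sub_smul]; abel

lemma ip_sComb (a b c : ℝ) : ip (sComb a b c) e3 = c := by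
  simp [ip, sComb, e1, e2, e3, Matrix.trace, Matrix.diag, Fin.sum_univ_two, Matrix.mul_apply,
    Matrix.smul_apply, Matrix.add_apply, Complex.add_re, Complex.mul_re]
  ring

lemma ip_sComb_mul (a1 a2 a3 b1 b2 b3 : ℝ) :
    ip (sComb a1 a2 a3 * sComb b1 b2 b3) e3 = a1 * b2 - a2 * b1 := by
  simp [ip, sComb, e1, e2, e3, Matrix.trace, Matrix.diag, Fin.sum_univ_two, Matrix.mul_apply,
    Matrix.smul_apply, Matrix.add_apply, Complex.add_re, Complex.mul_re]
  ring

lemma ip_add_left (A B C : M2) : ip (A + B) C = ip A C + ip B C := by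
  simp [ip, add_mul, Matrix.trace_add, Complex.add_re]; ring

lemma ip_sub_left (A B C : M2) : ip (A - B) C = ip A C - ip B C := by
  simp [ip, sub_mul, Matrix.trace_sub, Complex.sub_re]; ring

lemma ip_conj (U Z : M2) (hU : star U * U = 1) :
    ip (U * (Z * star U)) (U * e3 * star U) = ip Z e3 := by
  have h1 : (U * (Z * star U)) * (U * e3 * star U) = U * (Z * e3) * star U := by
    simp only [mul_assoc]
    rw [← mul_assoc (star U) U (e3 * star U), hU, one_mul]
  rw [ip, h1, Matrix.trace_mul_cycle, hU, one_mul, ip]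

/-! ### Calculus helpers -/

def starCLM : M2 →L[ℝ] M2 := LinearMap.toContinuousLinearMap
  { toFun := star
    map_add' := star_add
    map_smul' := fun r x => by simp [star_smul] }

@[simp] lemma starCLM_apply (X : M2) : starCLM X = star X := rfl

lemma diff_star {f : ℝ × ℝ → M2} {p : ℝ × ℝ} (hf : DifferentiableAt ℝ f p) :
    DifferentiableAt ℝ (fun q => star (f q)) p :=
  (starCLM.differentiableAt).comp p hf

lemma pd_star {f : ℝ × ℝ → M2} {p : ℝ × ℝ} (hf : DifferentiableAt ℝ f p) (w : ℝ × ℝ) :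
    fderiv ℝ (fun q => star (f q)) p w = star (fderiv ℝ f p w) := by
  have h := (starCLM.hasFDerivAt.comp p hf.hasFDerivAt).fderiv
  rw [show (fun q => star (f q)) = starCLM ∘ f from rfl]; erw [h]; rfl

lemma pd_mul {f g : ℝ × ℝ → M2} {p : ℝ × ℝ} (hf : DifferentiableAt ℝ f p)
    (hg : DifferentiableAt ℝ g p) (w : ℝ × ℝ) :
    fderiv ℝ (fun q => f q * g q) p w = fderiv ℝ f p w * g p + f p * fderiv ℝ g p w := by
  have h := (hf.hasFDerivAt.mul' hg.hasFDerivAt).fderiv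
  rw [show (fun q => f q * g q) = f * g from rfl]; erw [h]; simp [smul_eq_mul, add_comm]; rfl

lemma diff_sComb {a b c : ℝ × ℝ → ℝ} {p : ℝ × ℝ} (ha : DifferentiableAt ℝ a p)
    (hb : DifferentiableAt ℝ b p) (hc : DifferentiableAt ℝ c p) :
    DifferentiableAt ℝ (fun q => sComb (a q) (b q) (c q)) p :=
  ((ha.smul_const e1).add (hb.smul_const e2)).add (hc.smul_const e3)

lemma pd_sComb {a b c : ℝ × ℝ → ℝ} {p : ℝ × ℝ} (ha : DifferentiableAt ℝ a p)
    (hb : DifferentiableAt ℝ b p) (hc : DifferentiableAt ℝ c p) (w : ℝ × ℝ) :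
    fderiv ℝ (fun q => sComb (a q) (b q) (c q)) p w
      = sComb (fderiv ℝ a p w) (fderiv ℝ b p w) (fderiv ℝ c p w) := by
  have h := (((ha.hasFDerivAt.smul_const e1).add (hb.hasFDerivAt.smul_const e2)).add
    (hc.hasFDerivAt.smul_const e3)).fderiv
  rw [show (fun q => sComb (a q) (b q) (c q))
      = ((fun y => a y • e1) + fun y => b y • e2) + fun y => c y • e3 from rfl]
  erw [h]
  simp [sComb]; rfl

/-- First derivative of `f = G·F⁻¹` in direction `w`. -/
lemma deriv_f {D : Set (ℝ × ℝ)} (hD : IsOpen D) {F G : ℝ × ℝ → M2}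
    (hdF : ∀ q ∈ D, DifferentiableAt ℝ F q) (hdG : ∀ q ∈ D, DifferentiableAt ℝ G q)
    (hFinv : ∀ q ∈ D, (F q)⁻¹ = star (F q))
    {w : ℝ × ℝ} {X Y : ℝ × ℝ → M2}
    (hFw : ∀ q ∈ D, fderiv ℝ F q w = F q * X q)
    (hGw : ∀ q ∈ D, fderiv ℝ G q w = G q * Y q)
    (hsX : ∀ q ∈ D, star (X q) = -X q) :
    ∀ q ∈ D, fderiv ℝ (fun q' => G q' * (F q')⁻¹) q w
      = G q * ((Y q - X q) * star (F q)) := by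
  intro q hq
  have hev : (fun q' => G q' * (F q')⁻¹) =ᶠ[nhds q] (fun q' => G q' * star (F q')) := by
    filter_upwards [hD.mem_nhds hq] with x hx
    rw [hFinv x hx]
  rw [hev.fderiv_eq, pd_mul (hdG q hq) (diff_star (hdF q hq)), pd_star (hdF q hq),
    hFw q hq, hGw q hq, StarMul.star_mul, hsX q hq]
  noncomm_ring

/-- Second derivative of `f = G·F⁻¹`: derivative in direction `w2` of the function
`q ↦ G q * (C q * star (F q))`. -/
lemma deriv_phi {F G C : ℝ × ℝ → M2} {p : ℝ × ℝ}
    (hdF : DifferentiableAt ℝ F p) (hdG : DifferentiableAt ℝ G p)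
    (hdC : DifferentiableAt ℝ C p)
    {w2 : ℝ × ℝ} {X2 Y2 : M2}
    (hFw2 : fderiv ℝ F p w2 = F p * X2) (hGw2 : fderiv ℝ G p w2 = G p * Y2)
    (hsX2 : star X2 = -X2) :
    fderiv ℝ (fun q => G q * (C q * star (F q))) p w2
      = G p * ((Y2 * C p + fderiv ℝ C p w2 - C p * X2) * star (F p)) := by
  rw [pd_mul (g := fun q => C q * star (F q)) hdG (hdC.mul (diff_star hdF)), pd_mul hdC (diff_star hdF), pd_star hdF,
    hFw2, hGw2, StarMul.star_mul, hsX2]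
  noncomm_ring

theorem second_fundamental_form_of_projection
    (D : Set (ℝ × ℝ)) (hD : IsOpen D) (μ : ℝ) (hμ0 : μ ≠ 0) (hμ1 : μ ≠ 1)
    (F G : ℝ × ℝ → Matrix (Fin 2) (Fin 2) ℂ) (u0 v0 p1 p2 q1 q2 : ℝ × ℝ → ℝ)
    (hF : ContDiffOn ℝ (⊤ : ℕ∞) F D) (hG : ContDiffOn ℝ (⊤ : ℕ∞) G D)
    (hu0 : ContDiffOn ℝ (⊤ : ℕ∞) u0 D) (hv0 : ContDiffOn ℝ (⊤ : ℕ∞) v0 D)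
    (hp1 : ContDiffOn ℝ (⊤ : ℕ∞) p1 D) (hp2 : ContDiffOn ℝ (⊤ : ℕ∞) p2 D)
    (hq1 : ContDiffOn ℝ (⊤ : ℕ∞) q1 D) (hq2 : ContDiffOn ℝ (⊤ : ℕ∞) q2 D)
    (hFSU : ∀ p ∈ D, F p ∈ Matrix.specialUnitaryGroup (Fin 2) ℂ)
    (hGSU : ∀ p ∈ D, G p ∈ Matrix.specialUnitaryGroup (Fin 2) ℂ)
    (hFu : ∀ p ∈ D, (F p)⁻¹ * pu F p = u0 p • e3 + (p1 p • e1 + p2 p • e2))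
    (hFv : ∀ p ∈ D, (F p)⁻¹ * pv F p = v0 p • e3 + (q1 p • e1 + q2 p • e2))
    (hGu : ∀ p ∈ D, (G p)⁻¹ * pu G p = u0 p • e3 + μ • (p1 p • e1 + p2 p • e2))
    (hGv : ∀ p ∈ D, (G p)⁻¹ * pv G p = v0 p • e3 + μ⁻¹ • (q1 p • e1 + q2 p • e2)) :
    ∀ p ∈ D,
      ip ((G p * (F p)⁻¹)⁻¹ * pu (fun q => G q * (F q)⁻¹) p) (F p * e3 * (F p)⁻¹) = 0
      ∧ ip ((G p * (F p)⁻¹)⁻¹ * pv (fun q => G q * (F q)⁻¹) p) (F p * e3 * (F p)⁻¹) = 0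
      ∧ ip ((G p * (F p)⁻¹)⁻¹ * pu (pu (fun q => G q * (F q)⁻¹)) p) (F p * e3 * (F p)⁻¹) = 0
      ∧ ip ((G p * (F p)⁻¹)⁻¹ * pv (pv (fun q => G q * (F q)⁻¹)) p) (F p * e3 * (F p)⁻¹) = 0
      ∧ ip ((G p * (F p)⁻¹)⁻¹ * pv (pu (fun q => G q * (F q)⁻¹)) p) (F p * e3 * (F p)⁻¹)
          = (μ⁻¹ - μ) * (p1 p * q2 p - p2 p * q1 p) := by
  intro p hp
  -- unitarity facts
  have hFU : ∀ q ∈ D, F q * star (F q) = 1 := fun q hq =>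
    Matrix.mem_unitaryGroup_iff.mp (Matrix.mem_specialUnitaryGroup_iff.mp (hFSU q hq)).1
  have hFU' : ∀ q ∈ D, star (F q) * F q = 1 := fun q hq =>
    Matrix.mem_unitaryGroup_iff'.mp (Matrix.mem_specialUnitaryGroup_iff.mp (hFSU q hq)).1
  have hGU : ∀ q ∈ D, G q * star (G q) = 1 := fun q hq =>
    Matrix.mem_unitaryGroup_iff.mp (Matrix.mem_specialUnitaryGroup_iff.mp (hGSU q hq)).1
  have hGU' : ∀ q ∈ D, star (G q) * G q = 1 := fun q hq =>
    Matrix.mem_unitaryGroup_iff'.mp (Matrix.mem_specialUnitaryGroup_iff.mp (hGSU q hq)).1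
  have hFinv : ∀ q ∈ D, (F q)⁻¹ = star (F q) := fun q hq =>
    Matrix.inv_eq_left_inv (hFU' q hq)
  -- differentiability
  have hdF : ∀ q ∈ D, DifferentiableAt ℝ F q := fun q hq =>
    (hF.contDiffAt (hD.mem_nhds hq)).differentiableAt (by simp)
  have hdG : ∀ q ∈ D, DifferentiableAt ℝ G q := fun q hq =>
    (hG.contDiffAt (hD.mem_nhds hq)).differentiableAt (by simp)
  have hdp1 : DifferentiableAt ℝ p1 p := (hp1.contDiffAt (hD.mem_nhds hp)).differentiableAt (by simp)
  have hdp2 : DifferentiableAt ℝ p2 p := (hp2.contDiffAt (hD.mem_nhds hp)).differentiableAt (by simp)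
  have hdq1 : DifferentiableAt ℝ q1 p := (hq1.contDiffAt (hD.mem_nhds hp)).differentiableAt (by simp)
  have hdq2 : DifferentiableAt ℝ q2 p := (hq2.contDiffAt (hD.mem_nhds hp)).differentiableAt (by simp)
  -- normalized derivative formulas
  have norm1 : ∀ (H : ℝ × ℝ → M2) (Z : M2), (∀ q ∈ D, H q * star (H q) = 1) →
      ∀ q ∈ D, ∀ W : M2, (H q)⁻¹ * W = Z → W = H q * Z := by
    intro H Z hH q hq W h
    have hinv : (H q)⁻¹ = star (H q) :=
      Matrix.inv_eq_right_inv (hH q hq)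
    rw [hinv] at h
    calc W = (H q * star (H q)) * W := by rw [hH q hq, one_mul]
    _ = H q * (star (H q) * W) := by rw [mul_assoc]
    _ = H q * Z := by rw [h]
  have hFu' : ∀ q ∈ D, fderiv ℝ F q (1, 0) = F q * sComb (p1 q) (p2 q) (u0 q) := by
    intro q hq
    have h := norm1 F _ hFU q hq _ (hFu q hq)
    rw [show fderiv ℝ F q (1, 0) = pu F q from rfl, h]
    congr 1
    simp [sComb]; abel
  have hFv' : ∀ q ∈ D, fderiv ℝ F q (0, 1) = F q * sComb (q1 q) (q2 q) (v0 q) := by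
    intro q hq
    have h := norm1 F _ hFU q hq _ (hFv q hq)
    rw [show fderiv ℝ F q (0, 1) = pv F q from rfl, h]
    congr 1
    simp [sComb]; abel
  have hGu' : ∀ q ∈ D, fderiv ℝ G q (1, 0) = G q * sComb (μ * p1 q) (μ * p2 q) (u0 q) := by
    intro q hq
    have h := norm1 G _ hGU q hq _ (hGu q hq)
    rw [show fderiv ℝ G q (1, 0) = pu G q from rfl, h]
    congr 1
    simp [sComb, smul_smul]; abel
  have hGv' : ∀ q ∈ D, fderiv ℝ G q (0, 1) = G q * sComb (μ⁻¹ * q1 q) (μ⁻¹ * q2 q) (v0 q) := by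
    intro q hq
    have h := norm1 G _ hGU q hq _ (hGv q hq)
    rw [show fderiv ℝ G q (0, 1) = pv G q from rfl, h]
    congr 1
    simp [sComb, smul_smul]; abel
  -- first derivatives of f
  have keyu : ∀ q ∈ D, fderiv ℝ (fun q' => G q' * (F q')⁻¹) q (1, 0)
      = G q * (sComb ((μ - 1) * p1 q) ((μ - 1) * p2 q) 0 * star (F q)) := by
    intro q hq
    rw [deriv_f hD hdF hdG hFinv hFu' hGu' (fun q _ => star_sComb _ _ _) q hq, sComb_sub]
    have h1 : μ * p1 q - p1 q = (μ - 1) * p1 q := by ring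
    have h2 : μ * p2 q - p2 q = (μ - 1) * p2 q := by ring
    rw [h1, h2, sub_self]
  have keyv : ∀ q ∈ D, fderiv ℝ (fun q' => G q' * (F q')⁻¹) q (0, 1)
      = G q * (sComb ((μ⁻¹ - 1) * q1 q) ((μ⁻¹ - 1) * q2 q) 0 * star (F q)) := by
    intro q hq
    rw [deriv_f hD hdF hdG hFinv hFv' hGv' (fun q _ => star_sComb _ _ _) q hq, sComb_sub]
    have h1 : μ⁻¹ * q1 q - q1 q = (μ⁻¹ - 1) * q1 q := by ring
    have h2 : μ⁻¹ * q2 q - q2 q = (μ⁻¹ - 1) * q2 q := by ring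
    rw [h1, h2, sub_self]
  -- inverse of f and cancellation
  have cancel : ∀ W : M2, (F p * star (G p)) * (G p * W) = F p * W := fun W => by
    rw [mul_assoc, ← mul_assoc (star (G p)), hGU' p hp, one_mul]
  have hfinv : (G p * (F p)⁻¹)⁻¹ = F p * star (G p) := by
    rw [hFinv p hp]
    refine Matrix.inv_eq_left_inv ?_
    rw [mul_assoc, ← mul_assoc (star (G p)), hGU' p hp, one_mul, hFU p hp]
  -- differentiability of the coefficient matrices
  have hdCu : DifferentiableAt ℝ
      (fun q => sComb ((μ - 1) * p1 q) ((μ - 1) * p2 q) 0) p :=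
    diff_sComb (hdp1.const_mul (μ - 1)) (hdp2.const_mul (μ - 1)) (differentiableAt_const 0)
  have hdCv : DifferentiableAt ℝ
      (fun q => sComb ((μ⁻¹ - 1) * q1 q) ((μ⁻¹ - 1) * q2 q) 0) p :=
    diff_sComb (hdq1.const_mul (μ⁻¹ - 1)) (hdq2.const_mul (μ⁻¹ - 1)) (differentiableAt_const 0)
  simp only [pu, pv]
  refine ⟨?_, ?_, ?_, ?_, ?_⟩
  · erw [keyu p hp]; rw [hfinv, cancel, hFinv p hp, ip_conj _ _ (hFU' p hp), ip_sComb]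
  · erw [keyv p hp]; rw [hfinv, cancel, hFinv p hp, ip_conj _ _ (hFU' p hp), ip_sComb]
  · -- uu
    have hev2 : (fun q => fderiv ℝ (fun q' => G q' * (F q')⁻¹) q (1, 0)) =ᶠ[nhds p]
        (fun q => G q * (sComb ((μ - 1) * p1 q) ((μ - 1) * p2 q) 0 * star (F q))) := by
      filter_upwards [hD.mem_nhds hp] with x hx
      exact keyu x hx
    rw [show pu (fun q => G q * (F q)⁻¹) = fun q => fderiv ℝ (fun q' => G q' * (F q')⁻¹) q (1, 0)
        from rfl]; erw [hev2.fderiv_eq]; erw [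
      deriv_phi (hdF p hp) (hdG p hp) hdCu (hFu' p hp) (hGu' p hp) (star_sComb _ _ _),
      pd_sComb (hdp1.const_mul (μ - 1)) (hdp2.const_mul (μ - 1)) (differentiableAt_const 0)]
    rw [hfinv, cancel, hFinv p hp, ip_conj _ _ (hFU' p hp), ip_sub_left, ip_add_left,
      ip_sComb_mul, ip_sComb_mul, ip_sComb]
    simp only [fderiv_const_apply, ContinuousLinearMap.zero_apply]
    ring
  · -- vv
    have hev2 : (fun q => fderiv ℝ (fun q' => G q' * (F q')⁻¹) q (0, 1)) =ᶠ[nhds p]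
        (fun q => G q * (sComb ((μ⁻¹ - 1) * q1 q) ((μ⁻¹ - 1) * q2 q) 0 * star (F q))) := by
      filter_upwards [hD.mem_nhds hp] with x hx
      exact keyv x hx
    rw [show pv (fun q => G q * (F q)⁻¹) = fun q => fderiv ℝ (fun q' => G q' * (F q')⁻¹) q (0, 1)
        from rfl]; erw [hev2.fderiv_eq]; erw [
      deriv_phi (hdF p hp) (hdG p hp) hdCv (hFv' p hp) (hGv' p hp) (star_sComb _ _ _),
      pd_sComb (hdq1.const_mul (μ⁻¹ - 1)) (hdq2.const_mul (μ⁻¹ - 1)) (differentiableAt_const 0)]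
    rw [hfinv, cancel, hFinv p hp, ip_conj _ _ (hFU' p hp), ip_sub_left, ip_add_left,
      ip_sComb_mul, ip_sComb_mul, ip_sComb]
    simp only [fderiv_const_apply, ContinuousLinearMap.zero_apply]
    ring
  · -- vu (mixed)
    have hev2 : (fun q => fderiv ℝ (fun q' => G q' * (F q')⁻¹) q (1, 0)) =ᶠ[nhds p]
        (fun q => G q * (sComb ((μ - 1) * p1 q) ((μ - 1) * p2 q) 0 * star (F q))) := by
      filter_upwards [hD.mem_nhds hp] with x hx
      exact keyu x hx
    rw [show pu (fun q => G q * (F q)⁻¹) = fun q => fderiv ℝ (fun q' => G q' * (F q')⁻¹) q (1, 0)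
        from rfl]; erw [hev2.fderiv_eq]; erw [
      deriv_phi (hdF p hp) (hdG p hp) hdCu (hFv' p hp) (hGv' p hp) (star_sComb _ _ _),
      pd_sComb (hdp1.const_mul (μ - 1)) (hdp2.const_mul (μ - 1)) (differentiableAt_const 0)]
    rw [hfinv, cancel, hFinv p hp, ip_conj _ _ (hFU' p hp), ip_sub_left, ip_add_left,
      ip_sComb_mul, ip_sComb_mul, ip_sComb]
    simp only [fderiv_const_apply, ContinuousLinearMap.zero_apply]
    field_simp
    ring
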